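/- Effect minimality: Let G be an ADMG with cause X and effect Y. If there exists a superset Y+ containing Y such that the triple (X*, Y+, M*) satisfies the FDR criterion, then the triple (X*, {Y}, M*) also satisfies the FDR criterion. -/

import Mathlib

structure ADMG (V : Type) where
  dir : V → V → Prop
  bidir : V → V → Prop
  bidir_symm : ∀ {a b}, bidir a b → bidir b a
  acyclic : ∀ v, ¬ Relation.TransGen dir v v

namespace ADMG

variable {V : Type}

/-- Descendant set (reflexive directed-reachability closure). -/
def De (G : ADMG V) (S : Set V) : Set V :=
  {v | ∃ s ∈ S, Relation.ReflTransGen G.dir s v}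

/-- Ancestor set (including `S` itself). -/
def An (G : ADMG V) (S : Set V) : Set V :=
  {v | ∃ s ∈ S, Relation.ReflTransGen G.dir v s}

/-- Induced subgraph on `V \ M` (delete vertices of `M`). -/
def induce (G : ADMG V) (M : Set V) : ADMG V where
  dir u v := G.dir u v ∧ u ∉ M ∧ v ∉ M
  bidir u v := G.bidir u v ∧ u ∉ M ∧ v ∉ M
  bidir_symm h := ⟨G.bidir_symm h.1, h.2.2, h.2.1⟩
  acyclic v h := G.acyclic v (Relation.TransGen.mono (p := G.dir) (fun _ _ hd => hd.1) v v h)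

/-- Delete all directed edges whose tail lies in `Xs`. -/
def underline (G : ADMG V) (Xs : Set V) : ADMG V where
  dir u v := G.dir u v ∧ u ∉ Xs
  bidir := G.bidir
  bidir_symm h := G.bidir_symm h
  acyclic v h := G.acyclic v (Relation.TransGen.mono (p := G.dir) (fun _ _ hd => hd.1) v v h)

/-- Delete all edges with an arrowhead at a vertex of `Xs`. -/
def overline (G : ADMG V) (Xs : Set V) : ADMG V where
  dir u v := G.dir u v ∧ v ∉ Xs
  bidir u v := G.bidir u v ∧ u ∉ Xs ∧ v ∉ Xs
  bidir_symm h := ⟨G.bidir_symm h.1, h.2.2, h.2.1⟩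
  acyclic v h := G.acyclic v (Relation.TransGen.mono (p := G.dir) (fun _ _ hd => hd.1) v v h)

/-- Bidirected neighbours of `A` (outside of `A`). -/
def Nb (G : ADMG V) (A : Set V) : Set V :=
  {v | v ∉ A ∧ ∃ a ∈ A, G.bidir v a}

/-- `l` is the vertex list of a directed path from `x` to `y`. -/
def DirPath (G : ADMG V) (x y : V) (l : List V) : Prop :=
  l.Nodup ∧ l.head? = some x ∧ l.getLast? = some y ∧ List.Chain' G.dir l

/-- Edge labels along a mixed path: forward, backward, bidirected. -/
inductive Lab | fwd | bwd | bi

/-- `Edge G lab u v` : the step from `u` to `v` with label `lab` exists. -/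
def Edge (G : ADMG V) : Lab → V → V → Prop
  | .fwd, u, v => G.dir u v
  | .bwd, u, v => G.dir v u
  | .bi,  u, v => G.bidir u v

/-- A walk from `a` along labelled steps. -/
def WalkFrom (G : ADMG V) : V → List (Lab × V) → Prop
  | _, [] => True
  | a, (l, v) :: rest => G.Edge l a v ∧ WalkFrom G v rest

/-- The edge with this label has an arrowhead at its right endpoint. -/
def headInto : Lab → Prop
  | .fwd => True | .bi => True | .bwd => False

/-- The edge with this label has an arrowhead at its left endpoint. -/
def headOut : Lab → Prop
  | .bwd => True | .bi => True | .fwd => False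

/-- Collider (interior) vertices of a labelled step list. -/
def colliders : List (Lab × V) → Set V
  | (l₁, v) :: (l₂, w) :: rest =>
      {x | x = v ∧ headInto l₁ ∧ headOut l₂} ∪ colliders ((l₂, w) :: rest)
  | _ => ∅

/-- Non-collider interior vertices of a labelled step list. -/
def noncolliders : List (Lab × V) → Set V
  | (l₁, v) :: (l₂, w) :: rest =>
      {x | x = v ∧ ¬(headInto l₁ ∧ headOut l₂)} ∪ noncolliders ((l₂, w) :: rest)
  | _ => ∅

/-- A path (walk with pairwise distinct vertices, at least one edge). -/
def IsPath (G : ADMG V) (a : V) (steps : List (Lab × V)) : Prop :=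
  WalkFrom G a steps ∧ (a :: steps.map Prod.snd).Nodup ∧ steps ≠ []

/-- A path is blocked by `Z` (m-separation blocking). -/
def Blocked (G : ADMG V) (Z : Set V) (steps : List (Lab × V)) : Prop :=
  (∃ v ∈ noncolliders steps, v ∈ Z) ∨
  (∃ v ∈ colliders steps, ∀ d ∈ G.De {v}, d ∉ Z)

/-- m-separation of `A` and `B` given `Z` in `G`. -/
def MSep (G : ADMG V) (A B Z : Set V) : Prop :=
  ∀ a ∈ A, ∀ b ∈ B, ∀ steps : List (Lab × V),
    IsPath G a steps → (steps.map Prod.snd).getLast? = some b →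
    Blocked G Z steps

/-- `Ms` intercepts every directed path from `Xs` to `Ys`. -/
def Intercepts (G : ADMG V) (Xs Ys Ms : Set V) : Prop :=
  ∀ x ∈ Xs, ∀ y ∈ Ys, ∀ l : List V, DirPath G x y l → ∃ v ∈ l, v ∈ Ms

/-- The front-door reducibility (FDR) criterion for a triple. -/
def FDR (G : ADMG V) (Xs Ys Ms : Set V) : Prop :=
  Xs.Nonempty ∧ Ys.Nonempty ∧ Ms.Nonempty ∧
  Disjoint Xs Ys ∧ Disjoint Xs Ms ∧ Disjoint Ys Ms ∧
  Intercepts G Xs Ys Ms ∧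
  MSep (G.underline Xs) Xs Ms ∅ ∧
  (∀ m ∈ Ms, MSep ((G.overline Xs).underline {m}) Ys {m} (Xs ∪ (Ms \ {m})))

end ADMG
/-- Effect minimality: if `(Xs, Yp, Ms)` satisfies the FDR criterion
and `Y ∈ Yp`, then `(Xs, {Y}, Ms)` satisfies the FDR criterion. -/
theorem effect_minimality {V : Type} (G : ADMG V) (X Y : V) (Xs Yp Ms : Set V)
    (hX : X ∈ Xs) (hY : Y ∈ Yp) (hfdr : G.FDR Xs Yp Ms) :
    G.FDR Xs {Y} Ms := by
  obtain ⟨h1, h2, h3, h4, h5, h6, h7, h8, h9⟩ := hfdr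
  refine ⟨h1, ⟨Y, rfl⟩, h3, ?_, h5, ?_, ?_, h8, ?_⟩
  · exact Set.disjoint_left.mpr fun a ha hb => h4.le_bot ⟨ha, hb ▸ hY⟩
  · exact Set.disjoint_left.mpr fun a ha hb => h6.le_bot ⟨ha ▸ hY, hb⟩
  · intro x hx y hy l hl
    exact h7 x hx y (hy ▸ hY) l hl
  · intro m hm a ha b hb steps hp hlast
    exact h9 m hm a (ha ▸ hY) b hb steps hp hlast
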